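/- If a finite bipartite graph G = (X ⊔ Y, E) admits no matching that saturates every vertex of N_G(X), then G admits a nonempty envy-free matching. -/

import Mathlib

attribute [local instance] Classical.propDecidable

variable {V : Type*}

/-- `X, Y` form a bipartition of the vertex set of the simple graph `G`:
they are disjoint, cover all vertices, and every edge joins `X` to `Y`. -/
def IsBipartition [Fintype V] (G : SimpleGraph V) (X Y : Finset V) : Prop :=
  Disjoint X Y ∧ X ∪ Y = Finset.univ ∧
    ∀ ⦃u v : V⦄, G.Adj u v → (u ∈ X ∧ v ∈ Y) ∨ (u ∈ Y ∧ v ∈ X)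

/-- `M` is a matching of `G` all of whose edges go from `X'` to `Y'`
(i.e. a matching of the induced subgraph `G[X', Y']`), recorded as a set of
pairwise vertex-disjoint adjacent pairs. -/
def IsBipMatching (G : SimpleGraph V) (X' Y' : Finset V) (M : Finset (V × V)) : Prop :=
  (∀ p ∈ M, p.1 ∈ X' ∧ p.2 ∈ Y' ∧ G.Adj p.1 p.2) ∧
  ∀ p ∈ M, ∀ q ∈ M, p ≠ q → p.1 ≠ q.1 ∧ p.2 ≠ q.2

/-- `M` is envy-free w.r.t. `X`: no unmatched vertex of `X` is adjacent to a
matched vertex on the `Y`-side of `M`. -/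
def EnvyFree (G : SimpleGraph V) (X : Finset V) (M : Finset (V × V)) : Prop :=
  ∀ x ∈ X, x ∉ M.image Prod.fst → ∀ y ∈ M.image Prod.snd, ¬ G.Adj x y

/-- The (bipartite) graph `G[X ∪ Y]` is `Y`-path-saturated: for some `k ≥ 1` there are
partitions `X = X_0 ⊔ ⋯ ⊔ X_k` and `Y = Y_1 ⊔ ⋯ ⊔ Y_k` such that for `1 ≤ i ≤ k`
there is a perfect matching between `X_i` and `Y_i`, and every vertex of `Y_i` is
adjacent to some vertex of `X_{i-1}`. -/
def YPathSaturated (G : SimpleGraph V) (X Y : Finset V) : Prop :=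
  ∃ k : ℕ, 1 ≤ k ∧ ∃ A B : ℕ → Finset V,
    (∀ i ∈ Finset.range (k + 1), ∀ j ∈ Finset.range (k + 1), i ≠ j → Disjoint (A i) (A j)) ∧
    (∀ i ∈ Finset.Icc 1 k, ∀ j ∈ Finset.Icc 1 k, i ≠ j → Disjoint (B i) (B j)) ∧
    X = (Finset.range (k + 1)).biUnion A ∧
    Y = (Finset.Icc 1 k).biUnion B ∧
    (∀ i ∈ Finset.Icc 1 k, ∃ f : V → V,
      Set.BijOn f (A i) (B i) ∧ ∀ x ∈ A i, G.Adj x (f x)) ∧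
    (∀ i ∈ Finset.Icc 1 k, ∀ y ∈ B i, ∃ x ∈ A (i - 1), G.Adj x y)

/-!
Choose an inclusion-minimal Hall violator `T ⊆ N_G(X)`, i.e. `|N_X(T)| < |T|`; one exists since
otherwise Hall's theorem would saturate `N_G(X)`. Minimality makes `N_X(T)` satisfy Hall's condition
towards `T`, so a matching saturates `N_X(T)` inside `T`. It is envy-free: a vertex of `X` adjacent
to a matched vertex, which lies in `T`, belongs to `N_X(T)` and is therefore matched.
-/

open Finset

noncomputable def nbrsIn (G : SimpleGraph V) (t s : Finset V) : Finset V :=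
  t.filter fun v => ∃ u ∈ s, G.Adj u v

def IsHallViolator (G : SimpleGraph V) (t s : Finset V) : Prop :=
  #(nbrsIn G t s) < #s

namespace IsBipMatching

variable {G : SimpleGraph V} {X' Y' : Finset V} {M : Finset (V × V)}

theorem mono (hM : IsBipMatching G X' Y' M) {X'' Y'' : Finset V} (hX : X' ⊆ X'')
    (hY : Y' ⊆ Y'') : IsBipMatching G X'' Y'' M :=
  ⟨fun p hp => ⟨hX (hM.1 p hp).1, hY (hM.1 p hp).2.1, (hM.1 p hp).2.2⟩, hM.2⟩

theorem swap (hM : IsBipMatching G X' Y' M) : IsBipMatching G Y' X' (M.image Prod.swap) := by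
  refine ⟨?_, ?_⟩
  · intro _ hp
    obtain ⟨p, hpM, rfl⟩ := mem_image.1 hp
    obtain ⟨hp₁, hp₂, hadj⟩ := hM.1 p hpM
    exact ⟨hp₂, hp₁, hadj.symm⟩
  · intro _ hp _ hq hpq
    obtain ⟨p, hpM, rfl⟩ := mem_image.1 hp
    obtain ⟨q, hqM, rfl⟩ := mem_image.1 hq
    obtain ⟨h₁, h₂⟩ := hM.2 p hpM q hqM (ne_of_apply_ne _ hpq)
    exact ⟨h₂, h₁⟩

theorem image_snd_subset (hM : IsBipMatching G X' Y' M) : M.image Prod.snd ⊆ Y' := by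
  intro _ hp
  obtain ⟨p, hpM, rfl⟩ := mem_image.1 hp
  exact (hM.1 p hpM).2.1

end IsBipMatching

theorem exists_isBipMatching_of_forall_not_isHallViolator {G : SimpleGraph V} {s t : Finset V}
    (hall : ∀ s' ⊆ s, ¬ IsHallViolator G t s') :
    ∃ M, IsBipMatching G s t M ∧ M.image Prod.fst = s := by
  have hcard : ∀ A : Finset s, #A ≤ #(A.biUnion fun v => t.filter (G.Adj v)) := by
    intro A
    have hA : A.biUnion (fun v => t.filter (G.Adj v)) = nbrsIn G t (A.map (.subtype _)) := by
      ext w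
      simp only [nbrsIn, mem_biUnion, mem_filter, mem_map, Function.Embedding.subtype_apply]
      grind
    rw [hA, ← card_map (.subtype _)]
    exact not_lt.1 (hall _ (map_subtype_subset A))
  obtain ⟨f, hf, hft⟩ := (all_card_le_biUnion_card_iff_exists_injective _).1 hcard
  refine ⟨s.attach.image fun v => (v.1, f v), ⟨?_, ?_⟩, ?_⟩
  · intro p hp
    obtain ⟨v, -, rfl⟩ := mem_image.1 hp
    exact ⟨v.2, (mem_filter.1 (hft v)).1, (mem_filter.1 (hft v)).2⟩
  · intro p hp q hq hpq
    obtain ⟨v, -, rfl⟩ := mem_image.1 hp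
    obtain ⟨w, -, rfl⟩ := mem_image.1 hq
    have hvw : v ≠ w := fun h => hpq (h ▸ rfl)
    exact ⟨Subtype.val_injective.ne hvw, hf.ne hvw⟩
  · rw [image_image]
    exact attach_image_val

section

variable {G : SimpleGraph V} {s t u : Finset V}

theorem nbrsIn_nonempty_of_mem_nbrsIn {v : V} (hvs : v ∈ s) (hvu : v ∈ nbrsIn G t u) :
    (nbrsIn G u s).Nonempty := by
  obtain ⟨-, w, hwu, hwv⟩ := mem_filter.1 hvu
  exact ⟨w, mem_filter.2 ⟨hwu, v, hvs, hwv.symm⟩⟩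

theorem IsHallViolator.nonempty (h : IsHallViolator G t s) : s.Nonempty :=
  card_pos.1 (h.trans_le' (Nat.zero_le _))

/-- If `s ⊆ N(T)` were deficient, then `T \ N_T(s)` would be a smaller Hall violator. -/
theorem not_isHallViolator_of_minimal {X T : Finset V} (hT : Minimal (IsHallViolator G X) T) :
    ∀ s ⊆ nbrsIn G X T, ¬ IsHallViolator G T s := by
  intro s hs hs_viol
  set U := nbrsIn G T s
  have hU : U.Nonempty := by
    obtain ⟨x, hx⟩ := hs_viol.nonempty
    exact nbrsIn_nonempty_of_mem_nbrsIn hx (hs hx)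
  have hsub : nbrsIn G X (T \ U) ⊆ nbrsIn G X T \ s := by
    intro x hx
    obtain ⟨hxX, y, hy, hyx⟩ := mem_filter.1 hx
    obtain ⟨hyT, hyU⟩ := mem_sdiff.1 hy
    exact mem_sdiff.2 ⟨mem_filter.2 ⟨hxX, y, hyT, hyx⟩,
      fun hxs => hyU (mem_filter.2 ⟨hyT, x, hxs, hyx.symm⟩)⟩
  refine hT.not_lt ?_ (sdiff_ssubset (filter_subset _ _) hU)
  have hT_viol : #(nbrsIn G X T) < #T := hT.prop
  have hU_viol : #U < #s := hs_viol
  have hsS : #s ≤ #(nbrsIn G X T) := card_le_card hs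
  have hUT : #U ≤ #T := card_le_card (filter_subset _ _)
  calc #(nbrsIn G X (T \ U)) ≤ #(nbrsIn G X T \ s) := card_le_card hsub
    _ = #(nbrsIn G X T) - #s := card_sdiff_of_subset hs
    _ < #T - #U := by omega
    _ = #(T \ U) := (card_sdiff_of_subset (filter_subset _ _)).symm

end

theorem envyFree_of_nbrsIn_subset {G : SimpleGraph V} {X T : Finset V} {M : Finset (V × V)}
    (hMT : M.image Prod.snd ⊆ T) (hcover : nbrsIn G X T ⊆ M.image Prod.fst) :
    EnvyFree G X M :=
  fun _ hx hxM y hy hxy => hxM (hcover (mem_filter.2 ⟨hx, y, hMT hy, hxy.symm⟩))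

/-- if `G` admits no matching saturating every vertex of `N_G(X)`,
then `G` admits a nonempty envy-free matching. -/
theorem nonempty_envy_free_of_no_neighborhood_saturating [Fintype V]
    (G : SimpleGraph V) (X Y : Finset V) (hBip : IsBipartition G X Y)
    (h : ¬ ∃ M : Finset (V × V), IsBipMatching G X Y M ∧
        (Finset.univ.filter fun y => ∃ x ∈ X, G.Adj x y) ⊆ M.image Prod.snd) :
    ∃ M : Finset (V × V), IsBipMatching G X Y M ∧ M.Nonempty ∧ EnvyFree G X M := by
  obtain ⟨hdisj, -, hedge⟩ := hBip
  have hNY : nbrsIn G univ X ⊆ Y := fun y hy => by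
    obtain ⟨-, x, hx, hxy⟩ := mem_filter.1 hy
    exact ((hedge hxy).resolve_right fun h => disjoint_left.1 hdisj hx h.1).2
  obtain ⟨T₀, hT₀N, hT₀⟩ : ∃ T ⊆ nbrsIn G univ X, IsHallViolator G X T := by
    by_contra! hall
    obtain ⟨M, hM, hMN⟩ := exists_isBipMatching_of_forall_not_isHallViolator hall
    refine h ⟨M.image Prod.swap, hM.swap.mono subset_rfl hNY, ?_⟩
    rw [image_image]
    exact hMN.ge
  obtain ⟨T, hTT₀, hT⟩ := exists_minimal_le_of_wellFoundedLT (IsHallViolator G X) T₀ hT₀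
  obtain ⟨M, hM, hMS⟩ :=
    exists_isBipMatching_of_forall_not_isHallViolator (not_isHallViolator_of_minimal hT)
  refine ⟨M, hM.mono (filter_subset _ _) ((hTT₀.trans hT₀N).trans hNY), ?_,
    envyFree_of_nbrsIn_subset hM.image_snd_subset hMS.ge⟩
  obtain ⟨y, hy⟩ := hT.prop.nonempty
  refine Nonempty.of_image (f := Prod.fst) ?_
  rw [hMS]
  exact nbrsIn_nonempty_of_mem_nbrsIn hy (hT₀N (hTT₀ hy))
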